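/- arXiv:2604.03412 — 4 statements merged into one kernel-verified Lean document; each statement's English description precedes it below -/
import Mathlib

section
/- For any finite set P, any function f : P → [0,1], and any positive integer i ≤ |P|, the average over all i-element subsets P' of P of the product ∏_{p ∈ P'} (1 - f(p)) is at most (1 - (∑_{p ∈ P} f(p))/|P|)^i. -/
/-!
Write `e_k(s)` for the `k`-th elementary symmetric polynomial of a multiset `s` of nonnegative
numbers and `μ` for its mean. Expanding along one element,
`e_{j+1}(a :: s) = e_{j+1}(s) + a e_j(s)`, so by induction
`e_{j+1}(a :: s) ≤ C(m, j+1) μ^(j+1) + a C(m, j) μ^j` with `m = |s|`. This is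
`C(m+1, j+1)` times the tangent line of `x ↦ x^(j+1)` at `μ`, evaluated at the new mean, hence
at most `C(m+1, j+1)` times the `(j+1)`-st power of the new mean by Bernoulli's inequality.
The theorem is the case of the numbers `1 - f p`.
-/

open Finset

section

variable {R : Type*} [Field R] [LinearOrder R] [IsStrictOrderedRing R]

theorem choose_mul_pow_add_mul_choose_mul_pow_le {μ t : R} (hμ : 0 ≤ μ) (ht : 0 ≤ t)
    (m j : ℕ) :
    m.choose (j + 1) * μ ^ (j + 1) + t * (m.choose j * μ ^ j)
      ≤ (m + 1).choose (j + 1) * ((t + m * μ) / (m + 1)) ^ (j + 1) := by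
  set A := (t + m * μ) / (m + 1) with hA
  have hmA : ((m : R) + 1) * A = t + m * μ := by rw [hA]; field_simp
  have hpascal : ((m + 1).choose (j + 1) : R) = m.choose j + m.choose (j + 1) := by
    exact_mod_cast Nat.choose_succ_succ' m j
  have habsorb : ((m : R) + 1) * m.choose j = (m + 1).choose (j + 1) * (j + 1) := by
    exact_mod_cast Nat.add_one_mul_choose_eq m j
  have hbernoulli : μ ^ (j + 1) + (j + 1) * μ ^ j * (A - μ) ≤ A ^ (j + 1) := by
    have hA0 : 0 ≤ A := by rw [hA]; positivity
    simpa using pow_add_mul_le_add_pow (b := A - μ) hμ (by linarith) (j + 1)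
  calc (m.choose (j + 1) : R) * μ ^ (j + 1) + t * (m.choose j * μ ^ j)
      = (m + 1).choose (j + 1) * (μ ^ (j + 1) + (j + 1) * μ ^ j * (A - μ)) := by
        have hm : (m : R) + 1 ≠ 0 := by positivity
        apply mul_left_cancel₀ hm
        linear_combination (μ ^ j * (t - μ)) * habsorb - ((m : R) + 1) * μ ^ (j + 1) * hpascal
          - ((m + 1).choose (j + 1) * (j + 1) * μ ^ j : R) * hmA
    _ ≤ (m + 1).choose (j + 1) * A ^ (j + 1) := by gcongr

end

namespace Multiset

variable {R : Type*}

theorem esymm_cons_succ [CommSemiring R] (a : R) (s : Multiset R) (n : ℕ) :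
    (a ::ₘ s).esymm (n + 1) = s.esymm (n + 1) + a * s.esymm n := by
  simp only [esymm, powersetCard_cons, map_add, sum_add, map_map, Function.comp_def, prod_cons,
    sum_map_mul_left]

variable [Field R] [LinearOrder R] [IsStrictOrderedRing R]

theorem card_mul_sum_div_card (s : Multiset R) : (card s : R) * (s.sum / card s) = s.sum := by
  rcases eq_or_ne (card s) 0 with hs | hs
  · simp [card_eq_zero.1 hs]
  · field_simp

/-- **Maclaurin's inequality** -/
theorem esymm_le_choose_mul_pow_mean (s : Multiset R) (hs : ∀ x ∈ s, 0 ≤ x) (k : ℕ) :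
    s.esymm k ≤ (card s).choose k * (s.sum / card s) ^ k := by
  induction s using Multiset.induction_on generalizing k with
  | empty => cases k <;> simp [esymm, powersetCard_zero_right]
  | cons a s ih =>
    cases k with
    | zero => simp [esymm, powersetCard_zero_left]
    | succ j =>
      have ha : 0 ≤ a := hs a (mem_cons_self a s)
      have hs' : ∀ x ∈ s, 0 ≤ x := fun x hx => hs x (mem_cons_of_mem hx)
      have hmean : 0 ≤ s.sum / card s := div_nonneg (sum_nonneg hs') (Nat.cast_nonneg _)
      calc (a ::ₘ s).esymm (j + 1) = s.esymm (j + 1) + a * s.esymm j := esymm_cons_succ a s j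
        _ ≤ (card s).choose (j + 1) * (s.sum / card s) ^ (j + 1)
            + a * ((card s).choose j * (s.sum / card s) ^ j) := by
          gcongr
          exacts [ih hs' _, ih hs' _]
        _ ≤ (card s + 1).choose (j + 1)
              * ((a + card s * (s.sum / card s)) / (card s + 1)) ^ (j + 1) :=
          choose_mul_pow_add_mul_choose_mul_pow_le hmean ha _ _
        _ = _ := by rw [card_cons, sum_cons, card_mul_sum_div_card, Nat.cast_succ]

end Multiset

theorem stmt0_general {α : Type*} [DecidableEq α] (P : Finset α) (hP : P.Nonempty)
    (f : α → ℝ) (hf1 : ∀ p ∈ P, f p ≤ 1)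
    (i : ℕ) (hiP : i ≤ P.card) :
    (1 / (P.card.choose i : ℝ)) *
        ∑ P' ∈ P.powersetCard i, ∏ p ∈ P', (1 - f p)
      ≤ (1 - (∑ p ∈ P, f p) / P.card) ^ i := by
  have hnonneg : ∀ y ∈ P.val.map (1 - f ·), 0 ≤ y := by simpa using hf1
  have hmaclaurin := Multiset.esymm_le_choose_mul_pow_mean _ hnonneg i
  have hcard : (P.card : ℝ) ≠ 0 := by positivity
  have hmean : (P.val.map (1 - f ·)).sum / P.card = 1 - (∑ p ∈ P, f p) / P.card := by
    change (∑ p ∈ P, (1 - f p)) / P.card = _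
    rw [Finset.sum_sub_distrib, Finset.sum_const, nsmul_one]
    field_simp
  rw [Finset.esymm_map_val, Multiset.card_map, Finset.card_val, hmean] at hmaclaurin
  rwa [one_div, inv_mul_le_iff₀ (by exact_mod_cast Nat.choose_pos hiP)]

/-- Maclaurin-type averaging bound: the average over all `i`-element subsets `P'` of `P`
of `∏_{p ∈ P'} (1 - f p)` is at most `(1 - (∑_{p ∈ P} f p)/|P|)^i`. -/
theorem stmt0 {α : Type*} [DecidableEq α] (P : Finset α) (hP : P.Nonempty)
    (f : α → ℝ) (hf0 : ∀ p ∈ P, 0 ≤ f p) (hf1 : ∀ p ∈ P, f p ≤ 1)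
    (i : ℕ) (hi1 : 1 ≤ i) (hiP : i ≤ P.card) :
    (1 / (P.card.choose i : ℝ)) *
        ∑ P' ∈ P.powersetCard i, ∏ p ∈ P', (1 - f p)
      ≤ (1 - (∑ p ∈ P, f p) / P.card) ^ i :=
  stmt0_general P hP f hf1 i hiP
end

section
/- Let Π be a finite multiset of paths (each a finite set of vertices) over an n-element vertex set V, and for each π ∈ Π let suff(π) ⊆ π be a designated subset with |suff(π)| ≥ |π|/c for a constant c ≥ 1. Define suffdeg(v) as the number of paths whose suffix contains v, and deg(v) as the number of paths containing v, with d = (1/n)∑_v deg(v). If every path satisfies |π| ≥ L/λ and additionally ∑_v suffdeg(v) ≥ (1/c)∑_v deg(v), then there exists a path π_b ∈ Π with ∑_{v ∈ π_b} suffdeg(v) ≥ L·d/(c²·λ). -/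
/-!
Double counting gives `∑_π ∑_{v ∈ suff π} suffdeg v = ∑_v suffdeg(v)²`, which by Cauchy–Schwarz is
at least `(∑_v suffdeg v)² / n ≥ (∑_v deg v)² / (c² n) = (∑_v deg v) · d / c²`, and
`∑_v deg v = ∑_π |π| ≥ |Π| · L / λ`. As `suff π ⊆ π`, the total over `π ∈ Π` of
`∑_{v ∈ π} suffdeg v` is thus at least `|Π| · L d / (c² λ)`, and some path reaches the average.
-/

open Finset

section Incidence

variable {V ι : Type*} [Fintype V] [Fintype ι] [DecidableEq V]

/-- `degIn pth` and `degIn suff` are the `deg` and `suffdeg` of the paper. -/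
def degIn (A : ι → Finset V) (v : V) : ℕ := #{i | v ∈ A i}

theorem sum_sum_eq_sum_degIn_smul {M : Type*} [AddCommMonoid M] (A : ι → Finset V) (f : V → M) :
    ∑ i, ∑ v ∈ A i, f v = ∑ v, degIn A v • f v := by
  rw [sum_comm' (t' := univ) (s' := fun v => {i | v ∈ A i}) (by simp)]
  simp only [sum_const, degIn]

theorem sum_degIn_eq_sum_card (A : ι → Finset V) : ∑ v, degIn A v = ∑ i, #(A i) := by
  simp only [card_eq_sum_ones, sum_sum_eq_sum_degIn_smul, smul_eq_mul, mul_one]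

theorem sum_sum_degIn_eq_sum_sq (A : ι → Finset V) :
    ∑ i, ∑ v ∈ A i, degIn A v = ∑ v, degIn A v ^ 2 := by
  simp [sum_sum_eq_sum_degIn_smul, sq]

theorem sq_sum_degIn_le_card_mul_sum_sum_degIn {A B : ι → Finset V} (hAB : ∀ i, A i ⊆ B i) :
    (∑ v, degIn A v) ^ 2 ≤ Fintype.card V * ∑ i, ∑ v ∈ B i, degIn A v :=
  calc (∑ v, degIn A v) ^ 2 ≤ Fintype.card V * ∑ v, degIn A v ^ 2 := sq_sum_le_card_mul_sum_sq
    _ = Fintype.card V * ∑ i, ∑ v ∈ A i, degIn A v := by rw [sum_sum_degIn_eq_sum_sq]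
    _ ≤ Fintype.card V * ∑ i, ∑ v ∈ B i, degIn A v := by
      gcongr with i; exact hAB i

theorem exists_le_sum_degIn [Nonempty ι] {A B : ι → Finset V} (hAB : ∀ i, A i ⊆ B i)
    {c ℓ : ℝ} (hc : 0 ≤ c) (hlen : ∀ i, ℓ ≤ #(B i))
    (hdeg : 1 / c * ∑ v, (degIn B v : ℝ) ≤ ∑ v, (degIn A v : ℝ)) :
    ∃ i, ℓ * ((∑ v, (degIn B v : ℝ)) / Fintype.card V) / c ^ 2 ≤ ∑ v ∈ B i, (degIn A v : ℝ) := by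
  have hST : (∑ v, (degIn A v : ℝ)) ^ 2 ≤ Fintype.card V * ∑ i, ∑ v ∈ B i, (degIn A v : ℝ) := by
    exact_mod_cast sq_sum_degIn_le_card_mul_sum_sum_degIn hAB
  set D : ℝ := ∑ v, (degIn B v : ℝ)
  set S : ℝ := ∑ v, (degIn A v : ℝ)
  set n : ℝ := (Fintype.card V : ℝ)
  have hD : Fintype.card ι * ℓ ≤ D := by
    have := card_nsmul_le_sum univ (fun i => (#(B i) : ℝ)) ℓ fun i _ => hlen i
    simpa [D, ← Nat.cast_sum, sum_degIn_eq_sum_card] using this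
  have hS : D / c ≤ S := by rwa [div_eq_inv_mul, ← one_div]
  suffices h : ∑ _i : ι, ℓ * (D / n) / c ^ 2 ≤ ∑ i, ∑ v ∈ B i, (degIn A v : ℝ) by
    obtain ⟨i, -, hi⟩ := exists_le_of_sum_le univ_nonempty h
    exact ⟨i, hi⟩
  rw [sum_const, card_univ, nsmul_eq_mul]
  calc Fintype.card ι * (ℓ * (D / n) / c ^ 2) = Fintype.card ι * ℓ * (D / n) / c ^ 2 := by ring
    _ ≤ D * (D / n) / c ^ 2 := by gcongr
    _ = (D / c) ^ 2 / n := by ring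
    _ ≤ S ^ 2 / n := by gcongr
    _ ≤ ∑ i, ∑ v ∈ B i, (degIn A v : ℝ) :=
      div_le_of_le_mul₀ (by positivity) (by positivity) (by linarith)

end Incidence

theorem stmt5_general {V ι : Type*} [Fintype V] [Fintype ι] [DecidableEq V] [Nonempty ι]
    (pth suff : ι → Finset V)
    (hsub : ∀ i, suff i ⊆ pth i)
    (c L lam : ℝ) (hc : 1 ≤ c)
    (hlen : ∀ i, L / lam ≤ ((pth i).card : ℝ))
    (n : ℕ) (hn : n = Fintype.card V)
    (suffdeg deg : V → ℕ)
    (hsuffdeg : ∀ v, suffdeg v = (Finset.univ.filter fun i => v ∈ suff i).card)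
    (hdeg : ∀ v, deg v = (Finset.univ.filter fun i => v ∈ pth i).card)
    (d : ℝ) (hd : d = (∑ v, (deg v : ℝ)) / n)
    (hineq : (1 / c) * ∑ v, (deg v : ℝ) ≤ ∑ v, (suffdeg v : ℝ)) :
    ∃ i : ι, L * d / (c ^ 2 * lam) ≤ ∑ v ∈ pth i, (suffdeg v : ℝ) := by
  obtain rfl : suffdeg = degIn suff := funext hsuffdeg
  obtain rfl : deg = degIn pth := funext hdeg
  subst hn hd
  obtain ⟨i, hi⟩ := exists_le_sum_degIn hsub (by linarith) hlen hineq
  exact ⟨i, hi.trans_eq' (by ring)⟩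

/-- Base Path lemma: there is a path `π_b` whose vertices carry total suffix-degree
at least `L·d/(c²·λ)`. -/
theorem stmt5 {V ι : Type*} [Fintype V] [Fintype ι] [DecidableEq V] [Nonempty ι]
    (pth suff : ι → Finset V)
    (hsub : ∀ i, suff i ⊆ pth i)
    (c L lam : ℝ) (hc : 1 ≤ c) (hL : 0 < L) (hlam : 1 ≤ lam)
    (hsuffcard : ∀ i, ((pth i).card : ℝ) / c ≤ ((suff i).card : ℝ))
    (hlen : ∀ i, L / lam ≤ ((pth i).card : ℝ))
    (n : ℕ) (hn : n = Fintype.card V) (hn0 : 0 < n)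
    (suffdeg deg : V → ℕ)
    (hsuffdeg : ∀ v, suffdeg v = (Finset.univ.filter fun i => v ∈ suff i).card)
    (hdeg : ∀ v, deg v = (Finset.univ.filter fun i => v ∈ pth i).card)
    (d : ℝ) (hd : d = (∑ v, (deg v : ℝ)) / n)
    (hineq : (1 / c) * ∑ v, (deg v : ℝ) ≤ ∑ v, (suffdeg v : ℝ)) :
    ∃ i : ι, L * d / (c ^ 2 * lam) ≤ ∑ v ∈ pth i, (suffdeg v : ℝ) :=
  stmt5_general pth suff hsub c L lam hc hlen n hn suffdeg deg hsuffdeg hdeg d hd hineq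
end

section
/- Every directed path π on ℓ ≥ 1 vertices admits a set S of at most 4ℓ·(log₂ ℓ + 1) ordered pairs of its vertices such that: (1) for each (u,v) ∈ S there is a directed path from u to v in G; and (2) for any two vertices x, y of π such that y is reachable from x in G, either x = y, or (x,y) ∈ S, or there exists m with (x,m) ∈ S and (m,y) ∈ S. -/
/-!
Index the path by `0, …, ℓ - 1` and cut it into dyadic blocks. Two distinct indices `i < j`
first fall into a common block at some level `t + 1`, where they lie on either side of that
block's midpoint `m`, so `i < m ≤ j`. Linking every index to the midpoints of the
`log₂ ℓ + 1` blocks containing it, in both directions and only where reachability holds,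
gives `2ℓ(log₂ ℓ + 1)` pairs; a reachable pair `(x i, x j)` then hops through `x m`,
because `x m` lies on the path between `x i` and `x j`.
-/

open Finset

/-- The midpoint `i / 2 ^ (t + 1) * 2 ^ (t + 1) + 2 ^ t` of the dyadic block of length
`2 ^ (t + 1)` containing `i`. -/
def dyadicMid : ℕ → ℕ → ℕ
  | 0, i => i / 2 * 2 + 1
  | t + 1, i => 2 * dyadicMid t (i / 2)

theorem exists_dyadicMid_between (L : ℕ) {a b : ℕ} (hab : a < b) (hb : b < 2 ^ L) :
    ∃ t < L, a < dyadicMid t a ∧ dyadicMid t a ≤ b ∧ dyadicMid t b = dyadicMid t a := by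
  induction L generalizing a b with
  | zero => omega
  | succ L ih =>
    by_cases hhalf : a / 2 = b / 2
    · exact ⟨0, L.succ_pos, by simp only [dyadicMid]; omega⟩
    · have hb' : b / 2 < 2 ^ L := by rw [pow_succ] at hb; omega
      obtain ⟨t, htL, hlt, hle, heq⟩ := ih (a := a / 2) (by omega) hb'
      refine ⟨t + 1, by omega, ?_, ?_, ?_⟩
      · show a < 2 * dyadicMid t (a / 2); omega
      · show 2 * dyadicMid t (a / 2) ≤ b; omega
      · show 2 * dyadicMid t (b / 2) = 2 * dyadicMid t (a / 2); rw [heq]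

def dyadicSpokes (ℓ : ℕ) : Finset (ℕ × ℕ) :=
  (range ℓ ×ˢ range (Nat.log 2 ℓ + 1)).image fun q => (q.1, dyadicMid q.2 q.1)

theorem card_dyadicSpokes_le (ℓ : ℕ) : #(dyadicSpokes ℓ) ≤ ℓ * (Nat.log 2 ℓ + 1) :=
  card_image_le.trans (by simp)

theorem exists_mem_dyadicSpokes {ℓ i j : ℕ} (hij : i < j) (hj : j < ℓ) :
    ∃ m, i < m ∧ m ≤ j ∧ (i, m) ∈ dyadicSpokes ℓ ∧ (j, m) ∈ dyadicSpokes ℓ := by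
  obtain ⟨t, htL, hlt, hle, heq⟩ :=
    exists_dyadicMid_between _ hij (hj.trans (Nat.lt_pow_succ_log_self one_lt_two ℓ))
  have mem {k} (hk : k < ℓ) : (k, dyadicMid t k) ∈ dyadicSpokes ℓ :=
    mem_image.2 ⟨(k, t), mem_product.2 ⟨mem_range.2 hk, mem_range.2 htL⟩, rfl⟩
  exact ⟨dyadicMid t i, hlt, hle, mem (hij.trans hj), heq ▸ mem hj⟩

theorem exists_twoHop_cover {α : Type*} {R : α → α → Prop} [IsTrans α R] {ℓ : ℕ}
    {x : ℕ → α} (hx : ∀ i j, i ≤ j → j < ℓ → R (x i) (x j)) :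
    ∃ S : Finset (α × α), #S ≤ 2 * (ℓ * (Nat.log 2 ℓ + 1)) ∧
      (∀ p ∈ S, R p.1 p.2) ∧ ∀ i j, i < ℓ → j < ℓ → i ≠ j → R (x i) (x j) →
        ∃ m, (x i, m) ∈ S ∧ (m, x j) ∈ S := by
  classical
  set S := ((dyadicSpokes ℓ).image (fun p => (x p.1, x p.2)) ∪
    (dyadicSpokes ℓ).image (fun p => (x p.2, x p.1))).filter fun p => R p.1 p.2
  have fwd {p q : ℕ} (h : (p, q) ∈ dyadicSpokes ℓ) (r : R (x p) (x q)) : (x p, x q) ∈ S :=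
    mem_filter.2 ⟨mem_union_left _ (mem_image_of_mem (fun p => (x p.1, x p.2)) h), r⟩
  have bwd {p q : ℕ} (h : (p, q) ∈ dyadicSpokes ℓ) (r : R (x q) (x p)) : (x q, x p) ∈ S :=
    mem_filter.2 ⟨mem_union_right _ (mem_image_of_mem (fun p => (x p.2, x p.1)) h), r⟩
  refine ⟨S, ?_, fun p hp => (mem_filter.1 hp).2, fun i j hi hj hij hR => ?_⟩
  · calc #S ≤ #(dyadicSpokes ℓ) + #(dyadicSpokes ℓ) :=
          (card_filter_le _ _).trans <| (card_union_le _ _).trans <|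
            add_le_add card_image_le card_image_le
      _ ≤ 2 * (ℓ * (Nat.log 2 ℓ + 1)) := by linarith [card_dyadicSpokes_le ℓ]
  rcases hij.lt_or_gt with hlt | hgt
  · obtain ⟨m, him, hmj, hi_m, hj_m⟩ := exists_mem_dyadicSpokes hlt hj
    exact ⟨x m, fwd hi_m (hx _ _ him.le (hmj.trans_lt hj)), bwd hj_m (hx _ _ hmj hj)⟩
  · obtain ⟨m, hjm, hmi, hj_m, hi_m⟩ := exists_mem_dyadicSpokes hgt hi
    have hmi' : R (x m) (x i) := hx _ _ hmi hi
    have hjm' : R (x j) (x m) := hx _ _ hjm.le (hmi.trans_lt hi)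
    exact ⟨x m, fwd hi_m (_root_.trans hR hjm'), bwd hj_m (_root_.trans hmi' hR)⟩

theorem reflTransGen_of_path {V : Type*} {E : V → V → Prop} {ℓ : ℕ} {x : ℕ → V}
    (hpath : ∀ i, i + 1 < ℓ → E (x i) (x (i + 1))) {i j : ℕ} (hij : i ≤ j)
    (hj : j < ℓ) :
    Relation.ReflTransGen E (x i) (x j) :=
  (reflTransGen_of_succ_of_le (fun a b => E (x a) (x b))
    (fun k hk => hpath k (by simp only [Set.mem_Ico] at hk; omega)) hij).lift x
    fun _ _ h => h

theorem stmt9_general {V : Type*} (E : V → V → Prop) (ℓ : ℕ)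
    (x : ℕ → V) (hpath : ∀ i, i + 1 < ℓ → E (x i) (x (i + 1))) :
    ∃ S : Finset (V × V),
      (S.card : ℝ) ≤ 4 * ℓ * (Real.logb 2 ℓ + 1) ∧
      (∀ p ∈ S, Relation.ReflTransGen E p.1 p.2) ∧
      (∀ i j, i < ℓ → j < ℓ → Relation.ReflTransGen E (x i) (x j) →
        x i = x j ∨ (x i, x j) ∈ S ∨ ∃ m, (x i, m) ∈ S ∧ (m, x j) ∈ S) := by
  obtain ⟨S, hcard, hsound, hcover⟩ :=
    exists_twoHop_cover (R := Relation.ReflTransGen E) fun _ _ => reflTransGen_of_path hpath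
  refine ⟨S, ?_, hsound, fun i j hi hj hR => ?_⟩
  · have hcard' : (#S : ℝ) ≤ 2 * (ℓ * (Nat.log 2 ℓ + 1)) := by exact_mod_cast hcard
    have hlog := Real.natLog_le_logb ℓ 2
    push_cast at hlog
    nlinarith [(Nat.cast_nonneg ℓ : (0 : ℝ) ≤ ℓ)]
  · rcases eq_or_ne i j with rfl | hij
    · exact Or.inl rfl
    · exact Or.inr (Or.inr (hcover i j hi hj hij hR))

/-- 2-hop shortcut set: every directed path on `ℓ ≥ 1` vertices admits a set `S` of at most
`4ℓ(log₂ ℓ + 1)` reachable ordered pairs such that any reachable pair of path vertices is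
connected by at most 2 edges of `S`. -/
theorem stmt9 {V : Type*} [DecidableEq V] (E : V → V → Prop) (ℓ : ℕ) (hℓ : 1 ≤ ℓ)
    (x : ℕ → V) (hpath : ∀ i, i + 1 < ℓ → E (x i) (x (i + 1))) :
    ∃ S : Finset (V × V),
      (S.card : ℝ) ≤ 4 * ℓ * (Real.logb 2 ℓ + 1) ∧
      (∀ p ∈ S, Relation.ReflTransGen E p.1 p.2) ∧
      (∀ i j, i < ℓ → j < ℓ → Relation.ReflTransGen E (x i) (x j) →
        x i = x j ∨ (x i, x j) ∈ S ∨ ∃ m, (x i, m) ∈ S ∧ (m, x j) ∈ S) :=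
  stmt9_general E ℓ x hpath
end

section
/- Let L ≥ 1 and λ ≥ 1 with L/λ ≥ 2. Let π = (v₀, …, v_k) be a sequence with k ≥ L/λ, let prefix(π) be its first ⌈(k+1)/4⌉ vertices and suffix(π) its last ⌈(k+1)/4⌉ vertices, and let D : {v₀,…,v_k} → ℝ satisfy D(v_{i+1}) ≥ D(v_i) + 1/L for all i. Then for any u ∈ prefix(π) and v ∈ suffix(π), D(v) − D(u) ≥ (k+1)/(2L) − 2/L ≥ 1/(4λ) (for L/λ ≥ 8). -/
/-!
Telescoping the step bound gives `D j - D i ≥ (j - i) / L`, and an index among the first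
`⌈(k+1)/4⌉` and one among the last `⌈(k+1)/4⌉` of `0, …, k` are at least `k / 2` apart.
Finally `k ≥ L/λ ≥ 8` makes `(k+1)/2 - 2 ≥ k/4 ≥ L/(4λ)`.
-/

theorem add_sub_mul_le_of_add_le_succ {D : ℕ → ℝ} {c : ℝ} {k : ℕ}
    (hD : ∀ i, i < k → D i + c ≤ D (i + 1)) {a b : ℕ} (hab : a ≤ b) (hb : b ≤ k) :
    D a + ((b : ℝ) - a) * c ≤ D b := by
  induction b, hab using Nat.le_induction with
  | base => simp
  | succ b hab ih =>
    have hstep := hD b (by omega)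
    have hprev := ih (by omega)
    push_cast
    linarith

theorem prefix_suffix_index_gap {k i j : ℕ} (hi : i < (k + 4) / 4)
    (hj : k + 1 - (k + 4) / 4 ≤ j) : i ≤ j ∧ (k : ℝ) ≤ 2 * ((j : ℝ) - i) := by
  have hij : i ≤ j := by omega
  have hgap : k ≤ 2 * (j - i) := by omega
  refine ⟨hij, ?_⟩
  have := (Nat.cast_le (α := ℝ)).2 hgap
  push_cast [hij] at this
  exact this

theorem stmt19_general (L lam : ℝ) (hL : 1 ≤ L) (hratio : 8 ≤ L / lam)
    (k : ℕ) (hk : L / lam ≤ (k : ℝ))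
    (D : ℕ → ℝ) (hD : ∀ i, i < k → D i + 1 / L ≤ D (i + 1))
    (i j : ℕ) (hi : i < (k + 4) / 4) (hj1 : k + 1 - (k + 4) / 4 ≤ j) (hj2 : j ≤ k) :
    ((k : ℝ) + 1) / (2 * L) - 2 / L ≤ D j - D i ∧
      1 / (4 * lam) ≤ ((k : ℝ) + 1) / (2 * L) - 2 / L := by
  have hL0 : 0 < L := by linarith
  have hlam0 : 0 < lam := by
    by_contra! h
    linarith [div_nonpos_of_nonneg_of_nonpos hL0.le h]
  obtain ⟨hij, hgap⟩ := prefix_suffix_index_gap hi hj1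
  have hchain := add_sub_mul_le_of_add_le_succ hD hij hj2
  have hbound : ((k : ℝ) + 1) / (2 * L) - 2 / L = ((k - 3) / 2) * (1 / L) := by
    field_simp
    ring
  rw [hbound]
  constructor
  · calc ((k : ℝ) - 3) / 2 * (1 / L) ≤ ((j : ℝ) - i) * (1 / L) := by gcongr; linarith
      _ ≤ D j - D i := by linarith
  · calc 1 / (4 * lam) = L / lam / 4 * (1 / L) := by field_simp
      _ ≤ ((k : ℝ) - 3) / 2 * (1 / L) := by gcongr ?_ * _; linarith

/-- Prefix–suffix distance gap: along a path of `k+1 ≥ L/λ` vertices whose level values `D`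
increase by at least `1/L` each step, any prefix vertex and suffix vertex satisfy
`D j - D i ≥ (k+1)/(2L) - 2/L ≥ 1/(4λ)` (for `L/λ ≥ 8`). -/
theorem stmt19 (L lam : ℝ) (hL : 1 ≤ L) (hlam : 1 ≤ lam) (hratio : 8 ≤ L / lam)
    (k : ℕ) (hk : L / lam ≤ (k : ℝ))
    (D : ℕ → ℝ) (hD : ∀ i, i < k → D i + 1 / L ≤ D (i + 1))
    (i j : ℕ) (hi : i < (k + 4) / 4) (hj1 : k + 1 - (k + 4) / 4 ≤ j) (hj2 : j ≤ k) :
    ((k : ℝ) + 1) / (2 * L) - 2 / L ≤ D j - D i ∧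
      1 / (4 * lam) ≤ ((k : ℝ) + 1) / (2 * L) - 2 / L :=
  stmt19_general L lam hL hratio k hk D hD i j hi hj1 hj2
end
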